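/- For any two full-support probability distributions μ ≠ π on 𝒴, the value of the optimization problem min_{(q_1,q_2)} ( D(q_1‖μ) + D(q_2‖π) ), where the minimum is over pairs of probability distributions q_1, q_2 on 𝒴 satisfying D(q_1‖μ) ≥ D(q_2‖μ), is equal to 2·B(μ, π). (This is the key step showing that when only the outlier distribution μ is known, the test declaring as outlier the coordinate whose empirical distribution is closest to μ in relative entropy achieves the optimal error exponent 2·B(μ, π).) -/

import Mathlib

/-!
Let `g ∝ √μ √π` be the normalized geometric mean of `μ` and `π`. Since `log g` is the average of
`log μ` and `log π` shifted by `B(μ, π)`, every distribution `q` satisfies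
`D(q‖μ) + D(q‖π) = 2 D(q‖g) + 2 B(μ, π)`. Hence for a feasible pair,
`D(q₁‖μ) + D(q₂‖π) ≥ D(q₂‖μ) + D(q₂‖π) ≥ 2 B(μ, π)` by Gibbs' inequality, with equality at
`q₁ = q₂ = g`.
-/

open Filter Finset Topology

noncomputable section

/-- `p` is a probability distribution on the finite alphabet. -/
def IsProb {𝓨 : Type} [Fintype 𝓨] (p : 𝓨 → ℝ) : Prop :=
  (∀ y, 0 ≤ p y) ∧ ∑ y, p y = 1

/-- `p` has full support. -/
def FullSupport {𝓨 : Type} (p : 𝓨 → ℝ) : Prop := ∀ y, 0 < p y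

/-- Relative entropy `D(q‖p)` (natural log, convention `0·log 0 = 0`,
which holds since `Real.log 0 = 0` in Mathlib). -/
def KL {𝓨 : Type} [Fintype 𝓨] (q p : 𝓨 → ℝ) : ℝ :=
  ∑ y, q y * Real.log (q y / p y)

/-- Bhattacharyya distance `B(p,q) = -log ∑ √(p y) √(q y)`. -/
def Bhat {𝓨 : Type} [Fintype 𝓨] (p q : 𝓨 → ℝ) : ℝ :=
  - Real.log (∑ y, Real.sqrt (p y) * Real.sqrt (q y))

namespace Bhattacharyya

variable {𝓨 : Type} [Fintype 𝓨]

theorem kl_self (p : 𝓨 → ℝ) : KL p p = 0 := by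
  refine Finset.sum_eq_zero fun y _ => ?_
  rcases eq_or_ne (p y) 0 with h | h
  · simp [h]
  · simp [div_self h]

theorem kl_nonneg {q p : 𝓨 → ℝ} (hq : ∀ y, 0 ≤ q y) (hp : ∀ y, 0 < p y)
    (hsum : ∑ y, p y ≤ ∑ y, q y) : 0 ≤ KL q p := by
  have pointwise : ∀ y, q y * Real.log (q y / p y) = p y * InformationTheory.klFun (q y / p y)
      + q y - p y := fun y => by
    rw [InformationTheory.klFun]
    field_simp [(hp y).ne']
    ring
  have hkl : ∀ y ∈ univ, 0 ≤ p y * InformationTheory.klFun (q y / p y) := fun y _ =>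
    mul_nonneg (hp y).le (InformationTheory.klFun_nonneg (div_nonneg (hq y) (hp y).le))
  have := Finset.sum_nonneg hkl
  simp only [KL, pointwise, Finset.sum_add_distrib, Finset.sum_sub_distrib]
  linarith

def geometricMixture (μ π : 𝓨 → ℝ) (y : 𝓨) : ℝ :=
  Real.sqrt (μ y) * Real.sqrt (π y) / ∑ y, Real.sqrt (μ y) * Real.sqrt (π y)

variable {μ π : 𝓨 → ℝ}

theorem sum_sqrt_mul_sqrt_pos [Nonempty 𝓨] (hμ : FullSupport μ) (hπ : FullSupport π) :
    0 < ∑ y, Real.sqrt (μ y) * Real.sqrt (π y) :=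
  Finset.sum_pos (fun y _ => by have := hμ y; have := hπ y; positivity) univ_nonempty

theorem geometricMixture_pos [Nonempty 𝓨] (hμ : FullSupport μ) (hπ : FullSupport π) (y : 𝓨) :
    0 < geometricMixture μ π y := by
  have := hμ y; have := hπ y; have := sum_sqrt_mul_sqrt_pos hμ hπ
  unfold geometricMixture; positivity

theorem sum_geometricMixture [Nonempty 𝓨] (hμ : FullSupport μ) (hπ : FullSupport π) :
    ∑ y, geometricMixture μ π y = 1 := by
  simp only [geometricMixture]
  rw [← Finset.sum_div, div_self (sum_sqrt_mul_sqrt_pos hμ hπ).ne']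

theorem log_geometricMixture [Nonempty 𝓨] (hμ : FullSupport μ) (hπ : FullSupport π) (y : 𝓨) :
    Real.log (geometricMixture μ π y) = (Real.log (μ y) + Real.log (π y)) / 2 + Bhat μ π := by
  rw [geometricMixture, Bhat, Real.log_div (by have := hμ y; have := hπ y; positivity)
      (sum_sqrt_mul_sqrt_pos hμ hπ).ne', Real.log_mul (Real.sqrt_pos.2 (hμ y)).ne'
      (Real.sqrt_pos.2 (hπ y)).ne', Real.log_sqrt (hμ y).le, Real.log_sqrt (hπ y).le]
  ring

theorem kl_add_kl_eq [Nonempty 𝓨] (hμ : FullSupport μ) (hπ : FullSupport π) {q : 𝓨 → ℝ}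
    (hq : ∑ y, q y = 1) :
    KL q μ + KL q π = 2 * KL q (geometricMixture μ π) + 2 * Bhat μ π := by
  have pointwise : ∀ y, q y * Real.log (q y / μ y) + q y * Real.log (q y / π y)
      = 2 * (q y * Real.log (q y / geometricMixture μ π y)) + 2 * Bhat μ π * q y := fun y => by
    rcases eq_or_ne (q y) 0 with h | h
    · simp [h]
    rw [Real.log_div h (hμ y).ne', Real.log_div h (hπ y).ne',
      Real.log_div h (geometricMixture_pos hμ hπ y).ne', log_geometricMixture hμ hπ]
    ring
  rw [KL, KL, KL, ← Finset.sum_add_distrib, Finset.sum_congr rfl fun y _ => pointwise y,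
    Finset.sum_add_distrib, ← Finset.mul_sum, ← Finset.mul_sum, hq, mul_one]

end Bhattacharyya

open Bhattacharyya in
theorem statement7_general (𝓨 : Type) [Fintype 𝓨] [Nonempty 𝓨]
    (μ π : 𝓨 → ℝ)
    (hμf : FullSupport μ) (hπf : FullSupport π) :
    IsLeast {x : ℝ | ∃ q₁ q₂ : 𝓨 → ℝ, IsProb q₁ ∧ IsProb q₂ ∧
        KL q₁ μ ≥ KL q₂ μ ∧
        x = KL q₁ μ + KL q₂ π}
      (2 * Bhat μ π) := by
  set g := geometricMixture μ π
  have hg : IsProb g := ⟨fun y => (geometricMixture_pos hμf hπf y).le, sum_geometricMixture hμf hπf⟩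
  refine ⟨⟨g, g, hg, hg, le_rfl, ?_⟩, ?_⟩
  · rw [kl_add_kl_eq hμf hπf hg.2, kl_self]
    ring
  · rintro x ⟨q₁, q₂, -, hq₂, hge, rfl⟩
    have hgibbs : 0 ≤ KL q₂ g :=
      kl_nonneg hq₂.1 (geometricMixture_pos hμf hπf) (by rw [hg.2, hq₂.2])
    linarith [kl_add_kl_eq hμf hπf hq₂.2]

/-- `min { D(q₁‖μ)+D(q₂‖π) : D(q₁‖μ) ≥ D(q₂‖μ) } = 2·B(μ,π)`. -/
theorem statement7 (𝓨 : Type) [Fintype 𝓨] [Nonempty 𝓨]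
    (μ π : 𝓨 → ℝ) (hμ : IsProb μ) (hπ : IsProb π)
    (hμf : FullSupport μ) (hπf : FullSupport π) (hne : μ ≠ π) :
    IsLeast {x : ℝ | ∃ q₁ q₂ : 𝓨 → ℝ, IsProb q₁ ∧ IsProb q₂ ∧
        KL q₁ μ ≥ KL q₂ μ ∧
        x = KL q₁ μ + KL q₂ π}
      (2 * Bhat μ π) :=
  statement7_general 𝓨 μ π hμf hπf
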